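/- arXiv:1907.13476 — 6 statements merged into one kernel-verified Lean document; each statement's English description precedes it below -/
import Mathlib

section
/- If a σ-invariant Borel probability measure μ on E_A^+ is a Gibbs state for ψ with constant P, i.e., there is C ≥ 1 with C^{-1} ≤ μ([ω|_0^{n-1}]) / exp(S_nψ(τ) − Pn) ≤ C for all n ≥ 1, admissible words ω of length n and τ ∈ [ω], then P equals the topological pressure P(ψ) = lim_n (1/n) log ∑_{|ω|=n} exp(sup S_nψ|_{[ω]}). -/
open Filter MeasureTheory
open scoped ENNReal

/-- `A`-admissibility of a one-sided sequence. -/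
def IsAdm {E : Type*} (A : E → E → Prop) (x : ℕ → E) : Prop := ∀ n, A (x n) (x (n + 1))

/-- The Birkhoff sum `S_n ψ`. -/
noncomputable def birkhoff {E : Type*} (ψ : (ℕ → E) → ℝ) (n : ℕ) (x : ℕ → E) : ℝ :=
  ∑ i ∈ Finset.range n, ψ (fun k => x (k + i))

/-- The partition function `∑_{|ω|=n} exp(sup S_nψ|_{[ω]})`, in `ℝ≥0∞`. -/
noncomputable def partSum {E : Type*} (A : E → E → Prop) (ψ : (ℕ → E) → ℝ) (n : ℕ) : ℝ≥0∞ :=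
  ∑' ω : Fin n → E,
    ⨆ τ ∈ {x | IsAdm A x ∧ ∀ i : Fin n, x i = ω i},
      ENNReal.ofReal (Real.exp (birkhoff ψ n τ))

/-- If a shift-invariant Borel probability measure `μ` on `E_A^+` is a Gibbs state for a
continuous potential `ψ` with constant `P`, i.e. there is `C ≥ 1` such that
`C⁻¹ ≤ μ([ω|_0^{n-1}]) / exp(S_nψ(τ) - Pn) ≤ C` for all `n ≥ 1`, all admissible words `ω` of
length `n` and all `τ ∈ [ω]`, then `P` equals the topological pressure
`P(ψ) = lim_n (1/n) log ∑_{|ω|=n} exp(sup S_nψ|_{[ω]})`. -/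
theorem stmt_3 {E : Type*} [Countable E] [TopologicalSpace E] [DiscreteTopology E]
    [MeasurableSpace E] [BorelSpace E]
    (A : E → E → Prop)
    (hFI : ∃ F : Finset (List E), ∀ a b : E, ∃ w ∈ F, List.Chain' A (a :: (w ++ [b])))
    (ψ : (ℕ → E) → ℝ) (hψ : ContinuousOn ψ {x | IsAdm A x})
    (μ : Measure (ℕ → E)) [IsProbabilityMeasure μ]
    (hsupp : μ {x | IsAdm A x} = 1)
    (hinv : MeasurePreserving (fun (x : ℕ → E) (k : ℕ) => x (k + 1)) μ μ)
    (P C : ℝ) (hC : 1 ≤ C)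
    (hGibbs : ∀ n : ℕ, 1 ≤ n → ∀ ω : Fin n → E, ∀ τ : ℕ → E, IsAdm A τ →
      (∀ i : Fin n, τ i = ω i) →
      C⁻¹ * Real.exp (birkhoff ψ n τ - P * n) ≤
          (μ {x | IsAdm A x ∧ ∀ i : Fin n, x i = ω i}).toReal ∧
        (μ {x | IsAdm A x ∧ ∀ i : Fin n, x i = ω i}).toReal ≤
          C * Real.exp (birkhoff ψ n τ - P * n)) :
    Tendsto (fun n : ℕ => ENNReal.log (partSum A ψ n) / (n : EReal)) atTop (nhds (P : EReal)) := by
  have hCpos : (0:ℝ) < C := lt_of_lt_of_le one_pos hC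
  -- measurability
  have hmeasA : MeasurableSet {x : ℕ → E | IsAdm A x} := by
    have : {x : ℕ → E | IsAdm A x} =
        ⋂ n : ℕ, (fun x : ℕ → E => ((x n, x (n+1)) : E × E)) ⁻¹' {p | A p.1 p.2} := by
      ext x; simp [IsAdm, Set.mem_iInter]
    rw [this]
    refine MeasurableSet.iInter fun n => ?_
    exact ((measurable_pi_apply n).prodMk (measurable_pi_apply (n+1)))
      (Set.to_countable _).measurableSet
  have hmeasCyl : ∀ n : ℕ, ∀ ω : Fin n → E,
      MeasurableSet {x : ℕ → E | IsAdm A x ∧ ∀ i : Fin n, x i = ω i} := by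
    intro n ω
    have : {x : ℕ → E | IsAdm A x ∧ ∀ i : Fin n, x i = ω i} =
        {x | IsAdm A x} ∩ ⋂ i : Fin n, (fun x : ℕ → E => x i) ⁻¹' {ω i} := by
      ext x; simp [Set.mem_iInter]
    rw [this]
    exact hmeasA.inter (MeasurableSet.iInter fun i =>
      (measurable_pi_apply (i : ℕ)) (MeasurableSet.singleton _))
  -- the cylinders of length n partition the admissible set
  have hsum : ∀ n : ℕ,
      ∑' ω : Fin n → E, μ {x | IsAdm A x ∧ ∀ i : Fin n, x i = ω i} = 1 := by
    intro n
    have hdisj : Pairwise (Function.onFun Disjoint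
        fun ω : Fin n → E => {x : ℕ → E | IsAdm A x ∧ ∀ i : Fin n, x i = ω i}) := by
      intro ω ω' hne
      refine Set.disjoint_left.2 fun x hx hx' => hne ?_
      funext i
      rw [← hx.2 i, ← hx'.2 i]
    have hUnion : (⋃ ω : Fin n → E, {x : ℕ → E | IsAdm A x ∧ ∀ i : Fin n, x i = ω i})
        = {x | IsAdm A x} := by
      ext x
      constructor
      · rintro ⟨s, ⟨ω, rfl⟩, hx⟩; exact hx.1
      · intro hx; exact Set.mem_iUnion.2 ⟨fun i => x i, hx, fun i => rfl⟩
    rw [← measure_iUnion hdisj (fun ω => hmeasCyl n ω), hUnion, hsupp]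
  -- upper bound on partSum
  have hub : ∀ n : ℕ, 1 ≤ n →
      partSum A ψ n ≤ ENNReal.ofReal (C * Real.exp (P * n)) := by
    intro n hn
    have : partSum A ψ n ≤ ∑' ω : Fin n → E,
        ENNReal.ofReal (C * Real.exp (P * n)) *
          μ {x | IsAdm A x ∧ ∀ i : Fin n, x i = ω i} := by
      refine ENNReal.tsum_le_tsum fun ω => ?_
      refine iSup₂_le fun τ hτ => ?_
      have hG := (hGibbs n hn ω τ hτ.1 hτ.2).1
      have hexp : Real.exp (birkhoff ψ n τ) ≤
          C * Real.exp (P * n) * (μ {x | IsAdm A x ∧ ∀ i : Fin n, x i = ω i}).toReal := by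
        have h1 : Real.exp (birkhoff ψ n τ - P * n) ≤
            C * (μ {x | IsAdm A x ∧ ∀ i : Fin n, x i = ω i}).toReal := by
          calc Real.exp (birkhoff ψ n τ - P * n)
              = C * (C⁻¹ * Real.exp (birkhoff ψ n τ - P * n)) := by field_simp
            _ ≤ C * (μ _).toReal := mul_le_mul_of_nonneg_left hG hCpos.le
        have := mul_le_mul_of_nonneg_right h1 (Real.exp_pos (P * n)).le
        rw [← Real.exp_add] at this
        calc Real.exp (birkhoff ψ n τ) = Real.exp (birkhoff ψ n τ - P * n + P * n) := by ring_nf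
          _ ≤ C * (μ _).toReal * Real.exp (P * n) := this
          _ = C * Real.exp (P * n) * (μ _).toReal := by ring
      calc ENNReal.ofReal (Real.exp (birkhoff ψ n τ))
          ≤ ENNReal.ofReal (C * Real.exp (P * n) *
              (μ {x | IsAdm A x ∧ ∀ i : Fin n, x i = ω i}).toReal) :=
            ENNReal.ofReal_le_ofReal hexp
        _ = ENNReal.ofReal (C * Real.exp (P * n)) *
              μ {x | IsAdm A x ∧ ∀ i : Fin n, x i = ω i} := by
            rw [ENNReal.ofReal_mul (by positivity), ENNReal.ofReal_toReal (measure_ne_top μ _)]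
    calc partSum A ψ n ≤ _ := this
      _ = ENNReal.ofReal (C * Real.exp (P * n)) *
          ∑' ω : Fin n → E, μ {x | IsAdm A x ∧ ∀ i : Fin n, x i = ω i} :=
        ENNReal.tsum_mul_left
      _ = ENNReal.ofReal (C * Real.exp (P * n)) := by rw [hsum n, mul_one]
  -- lower bound on partSum
  have hlb : ∀ n : ℕ, 1 ≤ n →
      ENNReal.ofReal (C⁻¹ * Real.exp (P * n)) ≤ partSum A ψ n := by
    intro n hn
    have key : ∀ ω : Fin n → E,
        ENNReal.ofReal (C⁻¹ * Real.exp (P * n)) *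
          μ {x | IsAdm A x ∧ ∀ i : Fin n, x i = ω i} ≤
        ⨆ τ ∈ {x | IsAdm A x ∧ ∀ i : Fin n, x i = ω i},
          ENNReal.ofReal (Real.exp (birkhoff ψ n τ)) := by
      intro ω
      rcases Set.eq_empty_or_nonempty {x : ℕ → E | IsAdm A x ∧ ∀ i : Fin n, x i = ω i} with h | h
      · rw [h]; simp
      · obtain ⟨τ, hτ⟩ := h
        have hG := (hGibbs n hn ω τ hτ.1 hτ.2).2
        have hexp : C⁻¹ * Real.exp (P * n) *
            (μ {x | IsAdm A x ∧ ∀ i : Fin n, x i = ω i}).toReal ≤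
            Real.exp (birkhoff ψ n τ) := by
          have h2 := mul_le_mul_of_nonneg_right hG (Real.exp_pos (P * n)).le
          rw [mul_assoc, ← Real.exp_add, sub_add_cancel] at h2
          calc C⁻¹ * Real.exp (P * n) * (μ _).toReal
              = C⁻¹ * ((μ _).toReal * Real.exp (P * n)) := by ring
            _ ≤ C⁻¹ * (C * Real.exp (birkhoff ψ n τ)) :=
                mul_le_mul_of_nonneg_left h2 (inv_nonneg.2 hCpos.le)
            _ = Real.exp (birkhoff ψ n τ) := by field_simp
        calc ENNReal.ofReal (C⁻¹ * Real.exp (P * n)) *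
              μ {x | IsAdm A x ∧ ∀ i : Fin n, x i = ω i}
            = ENNReal.ofReal (C⁻¹ * Real.exp (P * n) *
                (μ {x | IsAdm A x ∧ ∀ i : Fin n, x i = ω i}).toReal) := by
              rw [ENNReal.ofReal_mul (p := C⁻¹ * Real.exp (P * (n:ℝ))) (by positivity),
                ENNReal.ofReal_toReal (measure_ne_top μ _)]
          _ ≤ ENNReal.ofReal (Real.exp (birkhoff ψ n τ)) := ENNReal.ofReal_le_ofReal hexp
          _ ≤ _ := le_iSup₂ (f := fun τ _ => ENNReal.ofReal (Real.exp (birkhoff ψ n τ))) τ hτ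
    calc ENNReal.ofReal (C⁻¹ * Real.exp (P * n))
        = ENNReal.ofReal (C⁻¹ * Real.exp (P * n)) *
            ∑' ω : Fin n → E, μ {x | IsAdm A x ∧ ∀ i : Fin n, x i = ω i} := by
          rw [hsum n, mul_one]
      _ = ∑' ω : Fin n → E, ENNReal.ofReal (C⁻¹ * Real.exp (P * n)) *
            μ {x | IsAdm A x ∧ ∀ i : Fin n, x i = ω i} := ENNReal.tsum_mul_left.symm
      _ ≤ partSum A ψ n := ENNReal.tsum_le_tsum key
  -- log bounds
  have hlog : ∀ n : ℕ, 1 ≤ n →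
      ((P * n - Real.log C : ℝ) : EReal) ≤ ENNReal.log (partSum A ψ n) ∧
      ENNReal.log (partSum A ψ n) ≤ ((P * n + Real.log C : ℝ) : EReal) := by
    intro n hn
    constructor
    · calc ((P * n - Real.log C : ℝ) : EReal)
          = ENNReal.log (ENNReal.ofReal (C⁻¹ * Real.exp (P * n))) := by
            rw [ENNReal.log_ofReal_of_pos (by positivity), Real.log_mul (by positivity)
              (Real.exp_ne_zero _), Real.log_inv, Real.log_exp]
            norm_num [sub_eq_add_neg, add_comm]
        _ ≤ _ := ENNReal.log_monotone (hlb n hn)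
    · calc ENNReal.log (partSum A ψ n)
          ≤ ENNReal.log (ENNReal.ofReal (C * Real.exp (P * n))) :=
            ENNReal.log_monotone (hub n hn)
        _ = ((P * n + Real.log C : ℝ) : EReal) := by
            rw [ENNReal.log_ofReal_of_pos (by positivity), Real.log_mul (by positivity)
              (Real.exp_ne_zero _), Real.log_exp]
            norm_num [add_comm]
  -- squeeze
  have hlim1 : Tendsto (fun n : ℕ => (((P * n - Real.log C) / n : ℝ) : EReal))
      atTop (nhds (P : EReal)) := by
    rw [EReal.tendsto_coe]
    have : Tendsto (fun n : ℕ => P + (-Real.log C) / n) atTop (nhds (P + 0)) :=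
      tendsto_const_nhds.add (tendsto_const_div_atTop_nhds_zero_nat _)
    rw [add_zero] at this
    refine this.congr' ?_
    filter_upwards [eventually_ge_atTop 1] with n hn
    have hn' : (n : ℝ) ≠ 0 := by positivity
    field_simp
    ring
  have hlim2 : Tendsto (fun n : ℕ => (((P * n + Real.log C) / n : ℝ) : EReal))
      atTop (nhds (P : EReal)) := by
    rw [EReal.tendsto_coe]
    have : Tendsto (fun n : ℕ => P + Real.log C / n) atTop (nhds (P + 0)) :=
      tendsto_const_nhds.add (tendsto_const_div_atTop_nhds_zero_nat _)
    rw [add_zero] at this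
    refine this.congr' ?_
    filter_upwards [eventually_ge_atTop 1] with n hn
    have hn' : (n : ℝ) ≠ 0 := by positivity
    field_simp
  refine tendsto_of_tendsto_of_tendsto_of_le_of_le' hlim1 hlim2 ?_ ?_
  · filter_upwards [eventually_ge_atTop 1] with n hn
    have h := (hlog n hn).1
    have hn0 : (0 : EReal) ≤ (n : EReal) := by
      rw [← EReal.coe_coe_eq_natCast]; exact_mod_cast Nat.cast_nonneg (α := ℝ) n
    calc (((P * n - Real.log C) / n : ℝ) : EReal)
        = ((P * n - Real.log C : ℝ) : EReal) / (n : EReal) := by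
          rw [EReal.coe_div, EReal.coe_coe_eq_natCast]
      _ ≤ _ := EReal.div_le_div_right_of_nonneg hn0 h
  · filter_upwards [eventually_ge_atTop 1] with n hn
    have h := (hlog n hn).2
    have hn0 : (0 : EReal) ≤ (n : EReal) := by
      rw [← EReal.coe_coe_eq_natCast]; exact_mod_cast Nat.cast_nonneg (α := ℝ) n
    calc ENNReal.log (partSum A ψ n) / (n : EReal)
        ≤ ((P * n + Real.log C : ℝ) : EReal) / (n : EReal) :=
          EReal.div_le_div_right_of_nonneg hn0 h
      _ = (((P * n + Real.log C) / n : ℝ) : EReal) := by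
          rw [EReal.coe_div, EReal.coe_coe_eq_natCast]
end

section
/- The measure with density 1/x with respect to Lebesgue measure on (0,1) is invariant (as a σ-finite measure) under the Rényi map V(x) = {1/(1−x)}: for every Borel set B ⊆ (0,1), ∫_{V^{-1}(B)} dx/x = ∫_B dx/x. -/
open MeasureTheory

/-- The Rényi (backward continued fraction) map `V(x) = {1/(1−x)}` for `x ≠ 0`, `V(0) = 0`. -/
noncomputable def renyiMap (x : ℝ) : ℝ := if x = 0 then 0 else Int.fract ((1 - x)⁻¹)

/-- The σ-finite measure `dx/x` on `(0,1)`. -/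
noncomputable def renyiMeasure : Measure ℝ :=
  (volume.restrict (Set.Ioo (0 : ℝ) 1)).withDensity (fun x => ENNReal.ofReal x⁻¹)

/-- The `n`-th inverse branch of the Rényi map: `x ↦ 1 - 1/(x+n+1)`. -/
noncomputable def renyiBranch (n : ℕ) (x : ℝ) : ℝ := 1 - (x + (n : ℝ) + 1)⁻¹

lemma renyiBranch_injective (n : ℕ) : Function.Injective (renyiBranch n) := by
  intro x y h
  have : (x + (n : ℝ) + 1)⁻¹ = (y + (n : ℝ) + 1)⁻¹ := by
    unfold renyiBranch at h; linarith
  have := inv_injective this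
  linarith

lemma renyiBranch_measurable (n : ℕ) : Measurable (renyiBranch n) := by
  unfold renyiBranch
  exact measurable_const.sub ((measurable_id.add_const _).add_const _).inv

lemma renyiMap_measurable : Measurable renyiMap := by
  unfold renyiMap
  apply Measurable.ite
  · exact measurableSet_eq
  · exact measurable_const
  · exact (Measurable.fract (measurable_const.sub measurable_id).inv)

/-- One-dimensional change of variables for the Lebesgue integral. -/
lemma lintegral_image_eq (s : Set ℝ) (hs : MeasurableSet s) {f f' : ℝ → ℝ}
    (hf' : ∀ x ∈ s, HasDerivWithinAt f (f' x) s x) (hf : Set.InjOn f s) (g : ℝ → ENNReal) :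
    ∫⁻ x in f '' s, g x = ∫⁻ x in s, ENNReal.ofReal |f' x| * g (f x) := by
  simpa only [ContinuousLinearMap.det_toSpanSingleton] using
    lintegral_image_eq_lintegral_abs_det_fderiv_mul volume hs
      (fun x hx => (hf' x hx).hasFDerivWithinAt) hf g

lemma renyiBranch_hasDeriv (n : ℕ) (x : ℝ) (hx : x ∈ Set.Ioo (0:ℝ) 1) :
    HasDerivAt (renyiBranch n) (((x + (n:ℝ) + 1)^2)⁻¹) x := by
  have hne : x + (n : ℝ) + 1 ≠ 0 := by
    have : (0:ℝ) < x + (n:ℝ) + 1 := by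
      have := hx.1
      positivity
    linarith
  have h1 : HasDerivAt (fun y : ℝ => y + (n:ℝ) + 1) 1 x := by
    simpa using ((hasDerivAt_id x).add_const ((n:ℝ))).add_const 1
  have h2 := h1.inv hne
  have h3 := h2.const_sub 1
  have h4 : HasDerivAt (renyiBranch n) (-(-1 / (x + (n:ℝ) + 1) ^ 2)) x := h3
  convert h4 using 1
  ring


lemma renyiBranch_mem (n : ℕ) {x : ℝ} (hx : x ∈ Set.Ioo (0:ℝ) 1) :
    renyiBranch n x ∈ Set.Ioo (0:ℝ) 1 := by
  obtain ⟨hx0, hx1⟩ := hx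
  have hn0 : (0:ℝ) ≤ (n:ℝ) := Nat.cast_nonneg n
  have h1 : (1:ℝ) < x + (n:ℝ) + 1 := by linarith
  have h0 : (0:ℝ) < x + (n:ℝ) + 1 := by linarith
  have hlt : (x + (n:ℝ) + 1)⁻¹ < 1 := by
    rw [inv_lt_one_iff₀]; right; exact h1
  have hpos : (0:ℝ) < (x + (n:ℝ) + 1)⁻¹ := inv_pos.mpr h0
  constructor <;> (unfold renyiBranch; linarith)

lemma renyiMap_renyiBranch (n : ℕ) {x : ℝ} (hx : x ∈ Set.Ioo (0:ℝ) 1) :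
    renyiMap (renyiBranch n x) = x := by
  obtain ⟨hx0, hx1⟩ := hx
  have hn0 : (0:ℝ) ≤ (n:ℝ) := Nat.cast_nonneg n
  have h1 : (1:ℝ) < x + (n:ℝ) + 1 := by linarith
  have h0 : (0:ℝ) < x + (n:ℝ) + 1 := by linarith
  have hy := renyiBranch_mem n ⟨hx0, hx1⟩
  have hyne : renyiBranch n x ≠ 0 := ne_of_gt hy.1
  rw [renyiMap, if_neg hyne]
  have h2 : 1 - renyiBranch n x = (x + (n:ℝ) + 1)⁻¹ := by
    unfold renyiBranch; ring
  rw [h2, inv_inv]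
  have : x + (n:ℝ) + 1 = x + ((n:ℤ) + 1 : ℤ) := by push_cast; ring
  rw [this, Int.fract_add_intCast, Int.fract_eq_self.mpr ⟨le_of_lt hx0, hx1⟩]

/-- Decomposition of the preimage into branch images. -/
lemma preimage_decomp {B : Set ℝ} (hB : B ⊆ Set.Ioo (0:ℝ) 1) :
    renyiMap ⁻¹' B ∩ Set.Ioo (0:ℝ) 1 = ⋃ n : ℕ, renyiBranch n '' B := by
  ext y
  simp only [Set.mem_inter_iff, Set.mem_preimage, Set.mem_iUnion, Set.mem_image]
  constructor
  · rintro ⟨hyB, hy0, hy1⟩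
    have hyne : y ≠ 0 := ne_of_gt hy0
    have h1y : (0:ℝ) < 1 - y := by linarith
    have h1y' : 1 - y < 1 := by linarith
    set t : ℝ := (1 - y)⁻¹ with ht
    have ht1 : 1 < t := (one_lt_inv_iff₀).mpr ⟨h1y, h1y'⟩
    have hfl : 1 ≤ ⌊t⌋ := by
      rw [Int.le_floor]; exact_mod_cast le_of_lt ht1
    set n : ℕ := (⌊t⌋ - 1).toNat with hn
    have hcast : ((n : ℝ) + 1) = (⌊t⌋ : ℝ) := by
      have : ((n : ℤ) : ℝ) = ((⌊t⌋ - 1 : ℤ) : ℝ) := by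
        exact_mod_cast congrArg (fun z : ℤ => (z : ℝ)) (Int.toNat_of_nonneg (by omega))
      push_cast at this ⊢
      linarith
    refine ⟨n, Int.fract t, ?_, ?_⟩
    · have : renyiMap y = Int.fract t := by rw [renyiMap, if_neg hyne]
      rwa [this] at hyB
    · unfold renyiBranch
      have hfr : Int.fract t = t - ⌊t⌋ := rfl
      have : Int.fract t + (n:ℝ) + 1 = t := by
        rw [hfr]; linarith [hcast]
      rw [this, ht, inv_inv]; ring
  · rintro ⟨n, x, hxB, hyx⟩
    have hx := hB hxB
    subst hyx
    exact ⟨by rw [renyiMap_renyiBranch n hx]; exact hxB, renyiBranch_mem n hx⟩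

lemma renyiBranch_image_subset (n : ℕ) {B : Set ℝ} (hB : B ⊆ Set.Ioo (0:ℝ) 1) :
    renyiBranch n '' B ⊆ Set.Ioo (0:ℝ) 1 := by
  rintro y ⟨x, hx, rfl⟩
  exact renyiBranch_mem n (hB hx)

lemma renyiBranch_image_disjoint {B : Set ℝ} (hB : B ⊆ Set.Ioo (0:ℝ) 1) :
    Pairwise (Function.onFun Disjoint fun n : ℕ => renyiBranch n '' B) := by
  have key : ∀ m n : ℕ, m < n →
      Disjoint (renyiBranch m '' B) (renyiBranch n '' B) := by
    intro m n hmn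
    rw [Set.disjoint_left]
    rintro y ⟨x, hx, rfl⟩ ⟨x', hx', he⟩
    obtain ⟨hx0, hx1⟩ := hB hx
    obtain ⟨hx'0, hx'1⟩ := hB hx'
    -- renyiBranch m x < 1 - (m+2)⁻¹ ≤ 1 - (n+1)⁻¹ < renyiBranch n x'
    have h0m : (0:ℝ) < x + m + 1 := by positivity
    have h0n : (0:ℝ) < (n:ℝ) + 1 := by positivity
    have hlt1 : renyiBranch m x < 1 - ((m:ℝ) + 2)⁻¹ := by
      unfold renyiBranch
      have : ((m:ℝ) + 2)⁻¹ < (x + m + 1)⁻¹ := by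
        apply inv_strictAnti₀ h0m; linarith
      linarith
    have hlt2 : 1 - ((n:ℝ) + 1)⁻¹ < renyiBranch n x' := by
      unfold renyiBranch
      have : (x' + n + 1)⁻¹ < ((n:ℝ) + 1)⁻¹ := by
        apply inv_strictAnti₀ h0n; linarith
      linarith
    have hle : ((n:ℝ) + 1)⁻¹ ≤ ((m:ℝ) + 2)⁻¹ := by
      apply inv_anti₀ (by positivity)
      have : (m:ℝ) + 1 ≤ (n:ℝ) := by exact_mod_cast hmn
      linarith
    rw [he] at hlt2
    linarith
  intro m n hmn
  rcases lt_or_gt_of_ne hmn with h | h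
  · exact key m n h
  · exact (key n m h).symm

lemma telescoping_tsum {x : ℝ} (hx : 0 < x) :
    ∑' n : ℕ, ENNReal.ofReal ((x + (n:ℝ))⁻¹ - (x + (n:ℝ) + 1)⁻¹) = ENNReal.ofReal x⁻¹ := by
  set f : ℕ → ℝ := fun n => (x + (n:ℝ))⁻¹ - (x + (n:ℝ) + 1)⁻¹ with hf
  have hpos : ∀ n : ℕ, (0:ℝ) < x + (n:ℝ) := fun n => by positivity
  have hnonneg : ∀ n : ℕ, 0 ≤ f n := by
    intro n
    have h1 : (x + (n:ℝ) + 1)⁻¹ ≤ (x + (n:ℝ))⁻¹ :=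
      inv_anti₀ (hpos n) (by linarith)
    simp only [hf]; linarith
  have hsum : HasSum f x⁻¹ := by
    rw [hasSum_iff_tendsto_nat_of_nonneg hnonneg]
    have heq : ∀ N : ℕ, ∑ i ∈ Finset.range N, f i = x⁻¹ - (x + (N:ℝ))⁻¹ := by
      intro N
      have := Finset.sum_range_sub' (f := fun n : ℕ => (x + (n:ℝ))⁻¹) N
      rw [show ∑ i ∈ Finset.range N, f i
          = ∑ i ∈ Finset.range N, ((fun n : ℕ => (x + (n:ℝ))⁻¹) i
              - (fun n : ℕ => (x + (n:ℝ))⁻¹) (i+1)) from ?_, this]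
      · push_cast; ring_nf
      · apply Finset.sum_congr rfl
        intro i _
        simp only [hf]; push_cast; ring_nf
    simp only [heq]
    have htend : Filter.Tendsto (fun N : ℕ => (x + (N:ℝ))⁻¹) Filter.atTop (nhds 0) := by
      apply Filter.Tendsto.inv_tendsto_atTop
      apply Filter.tendsto_atTop_add_const_left
      exact tendsto_natCast_atTop_atTop
    have := Filter.Tendsto.sub (tendsto_const_nhds (x := x⁻¹)) htend
    simpa using this
  have hsummable : Summable f := ⟨x⁻¹, hsum⟩
  rw [← ENNReal.ofReal_tsum_of_nonneg hnonneg hsummable, hsum.tsum_eq]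

/-- The measure with density `1/x` with respect to Lebesgue measure on `(0,1)` is invariant
under the Rényi map: `∫_{V⁻¹(B)} dx/x = ∫_B dx/x` for every Borel `B ⊆ (0,1)`. -/
theorem stmt_13 :
    ∀ B : Set ℝ, MeasurableSet B → B ⊆ Set.Ioo (0 : ℝ) 1 →
      renyiMeasure (renyiMap ⁻¹' B) = renyiMeasure B := by
  intro B hBm hBs
  have hIoo : MeasurableSet (Set.Ioo (0:ℝ) 1) := measurableSet_Ioo
  have hPre : MeasurableSet (renyiMap ⁻¹' B) := renyiMap_measurable hBm
  have hEmb : ∀ n : ℕ, MeasurableEmbedding (renyiBranch n) := fun n =>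
    (renyiBranch_measurable n).measurableEmbedding (renyiBranch_injective n)
  have hImB : ∀ n : ℕ, MeasurableSet (renyiBranch n '' B) := fun n =>
    (hEmb n).measurableSet_image' hBm
  -- rewrite both sides as lintegrals over volume
  have hmeasure : ∀ S : Set ℝ, MeasurableSet S → S ⊆ Set.Ioo (0:ℝ) 1 →
      renyiMeasure S = ∫⁻ x in S, ENNReal.ofReal x⁻¹ := by
    intro S hS hSs
    rw [renyiMeasure, withDensity_apply _ hS, Measure.restrict_restrict hS,
      Set.inter_eq_self_of_subset_left hSs]
  -- LHS
  have hL1 : renyiMeasure (renyiMap ⁻¹' B)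
      = renyiMeasure (renyiMap ⁻¹' B ∩ Set.Ioo (0:ℝ) 1) := by
    rw [renyiMeasure, withDensity_apply _ hPre,
      withDensity_apply _ (hPre.inter hIoo), Measure.restrict_restrict hPre,
      Measure.restrict_restrict (hPre.inter hIoo), Set.inter_assoc,
      Set.inter_self]
  rw [hL1, hmeasure _ (hPre.inter hIoo) Set.inter_subset_right,
    preimage_decomp hBs,
    lintegral_iUnion hImB (renyiBranch_image_disjoint hBs)]
  -- change of variables on each branch
  have hbranch : ∀ n : ℕ, ∫⁻ x in renyiBranch n '' B, ENNReal.ofReal x⁻¹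
      = ∫⁻ x in B, ENNReal.ofReal ((x + (n:ℝ))⁻¹ - (x + (n:ℝ) + 1)⁻¹) := by
    intro n
    rw [lintegral_image_eq B hBm
      (f' := fun x => ((x + (n:ℝ) + 1)^2)⁻¹)
      (fun x hx => ((renyiBranch_hasDeriv n x (hBs hx)).hasDerivWithinAt))
      ((renyiBranch_injective n).injOn) _]
    apply setLIntegral_congr_fun hBm
    intro x hx
    beta_reduce
    obtain ⟨hx0, hx1⟩ := hBs hx
    have h0 : (0:ℝ) < x + (n:ℝ) := by positivity
    have h1 : (0:ℝ) < x + (n:ℝ) + 1 := by linarith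
    have habs : |((x + (n:ℝ) + 1)^2)⁻¹| = ((x + (n:ℝ) + 1)^2)⁻¹ := by
      rw [abs_of_pos]; positivity
    have hbr : renyiBranch n x = (x + (n:ℝ)) / (x + (n:ℝ) + 1) := by
      unfold renyiBranch; field_simp; ring
    rw [habs, hbr, ← ENNReal.ofReal_mul (by positivity)]
    congr 1
    rw [inv_div]
    field_simp
    ring
  simp only [hbranch]
  -- swap tsum and integral, then telescope
  rw [← lintegral_tsum (f := fun (n : ℕ) (x : ℝ) => ENNReal.ofReal ((x + (n:ℝ))⁻¹ - (x + (n:ℝ) + 1)⁻¹)) (fun n => ((measurable_id.add_const ((n:ℝ))).inv.sub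
      (((measurable_id.add_const ((n:ℝ))).add_const 1).inv)).ennreal_ofReal.aemeasurable)]
  rw [hmeasure B hBm hBs]
  apply setLIntegral_congr_fun hBm
  intro x hx
  exact telescoping_tsum (hBs hx).1
end

section
/- Let β = (1+√5)/2 and Z = [0, 1/β) × [0,1) ∪ [1/β, 1) × [0, 1/β). The map T_β(x,y) = (βx mod 1, (y + ⌊βx⌋)/β) is a well-defined bijection from Z to Z. -/
/-- The natural extension map `T_β(x,y) = (βx mod 1, (y + ⌊βx⌋)/β)`. -/
noncomputable def natExtMap (β : ℝ) (p : ℝ × ℝ) : ℝ × ℝ :=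
  (Int.fract (β * p.1), (p.2 + (⌊β * p.1⌋ : ℝ)) / β)

set_option maxHeartbeats 1000000 in
/-- For the golden ratio `β = (1+√5)/2` and
`Z = [0,1/β) × [0,1) ∪ [1/β,1) × [0,1/β)`, the map `T_β(x,y) = (βx mod 1, (y+⌊βx⌋)/β)`
is a well-defined bijection from `Z` to `Z`. -/
theorem stmt_15 (β : ℝ) (hβ : β = (1 + Real.sqrt 5) / 2) :
    Set.BijOn (natExtMap β)
      (Set.Ico (0 : ℝ) β⁻¹ ×ˢ Set.Ico (0 : ℝ) 1 ∪
        Set.Ico β⁻¹ (1 : ℝ) ×ˢ Set.Ico (0 : ℝ) β⁻¹)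
      (Set.Ico (0 : ℝ) β⁻¹ ×ˢ Set.Ico (0 : ℝ) 1 ∪
        Set.Ico β⁻¹ (1 : ℝ) ×ˢ Set.Ico (0 : ℝ) β⁻¹) := by
  have h5 : Real.sqrt 5 ^ 2 = 5 := Real.sq_sqrt (by norm_num)
  have h5g : 1 < Real.sqrt 5 := by nlinarith [Real.sqrt_nonneg 5]
  have h5l : Real.sqrt 5 < 3 := by nlinarith [Real.sqrt_nonneg 5]
  have hb1 : 1 < β := by rw [hβ]; linarith
  have hb0 : 0 < β := by linarith
  have hb2 : β < 2 := by rw [hβ]; linarith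
  have hsq : β * β = β + 1 := by rw [hβ]; nlinarith
  have hmi : β * β⁻¹ = 1 := mul_inv_cancel₀ (ne_of_gt hb0)
  have hinv : β⁻¹ = β - 1 := by
    have h := hmi
    nlinarith [hsq, hmi, mul_pos hb0 (inv_pos.mpr hb0)]
  have hinv0 : 0 < β⁻¹ := by positivity
  have hinv1 : β⁻¹ < 1 := by rw [hinv]; linarith
  -- basic multiplicative helpers
  have hml : ∀ x : ℝ, x < β⁻¹ → β * x < 1 := by
    intro x hx
    calc β * x < β * β⁻¹ := mul_lt_mul_of_pos_left hx hb0
      _ = 1 := hmi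
  have hmg' : ∀ x : ℝ, β⁻¹ ≤ x → 1 ≤ β * x := by
    intro x hx
    calc (1:ℝ) = β * β⁻¹ := hmi.symm
      _ ≤ β * x := mul_le_mul_of_nonneg_left hx (le_of_lt hb0)
  have hmb : ∀ x : ℝ, x < 1 → β * x < β := by
    intro x hx
    nlinarith
  have hdl : ∀ y : ℝ, y < 1 → y / β < β⁻¹ := by
    intro y hy
    rw [div_lt_iff₀ hb0]
    calc y < 1 := hy
      _ = β⁻¹ * β := (inv_mul_cancel₀ (ne_of_gt hb0)).symm
  -- floor computations
  have hfl0 : ∀ x : ℝ, 0 ≤ x → x < β⁻¹ → ⌊β * x⌋ = 0 := by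
    intro x hx hx'
    rw [Int.floor_eq_zero_iff]
    exact ⟨by positivity, hml x hx'⟩
  have hfl1 : ∀ x : ℝ, β⁻¹ ≤ x → x < 1 → ⌊β * x⌋ = 1 := by
    intro x hx hx'
    rw [Int.floor_eq_iff]
    constructor
    · push_cast; exact hmg' x hx
    · push_cast; linarith [hmb x hx']
  set g : ℝ × ℝ → ℝ × ℝ := fun p => ((p.1 + (⌊β * p.2⌋ : ℝ)) / β, Int.fract (β * p.2)) with hg
  set Z := (Set.Ico (0 : ℝ) β⁻¹ ×ˢ Set.Ico (0 : ℝ) 1 ∪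
        Set.Ico β⁻¹ (1 : ℝ) ×ˢ Set.Ico (0 : ℝ) β⁻¹) with hZ
  have hmf : Set.MapsTo (natExtMap β) Z Z := by
    rintro ⟨x, y⟩ hp
    simp only [hZ, Set.mem_union, Set.mem_prod, Set.mem_Ico] at hp ⊢
    rcases hp with ⟨⟨hx0, hx1⟩, hy0, hy1⟩ | ⟨⟨hx0, hx1⟩, hy0, hy1⟩
    · -- x ∈ [0, β⁻¹), y ∈ [0,1)
      have hfl : ⌊β * x⌋ = 0 := hfl0 x hx0 hx1
      have hfr : Int.fract (β * x) = β * x := by rw [Int.fract, hfl]; push_cast; ring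
      simp only [natExtMap, hfr, hfl]
      push_cast
      have hbx1 : β * x < 1 := hml x hx1
      have hyb : (y + 0) / β < β⁻¹ := by rw [add_zero]; exact hdl y hy1
      rcases lt_or_ge (β * x) β⁻¹ with h | h
      · exact Or.inl ⟨⟨by positivity, h⟩, by positivity, lt_trans hyb hinv1⟩
      · exact Or.inr ⟨⟨h, hbx1⟩, by positivity, hyb⟩
    · -- x ∈ [β⁻¹, 1), y ∈ [0, β⁻¹)
      have hfl : ⌊β * x⌋ = 1 := hfl1 x hx0 hx1
      have hfr : Int.fract (β * x) = β * x - 1 := by rw [Int.fract, hfl]; push_cast; ring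
      simp only [natExtMap, hfr, hfl]
      push_cast
      left
      refine ⟨⟨?_, ?_⟩, ?_, ?_⟩
      · linarith [hmg' x hx0]
      · rw [hinv]; linarith [hmb x hx1]
      · positivity
      · rw [div_lt_one hb0, hinv] at *; linarith
  have hmg : Set.MapsTo g Z Z := by
    rintro ⟨u, v⟩ hp
    simp only [hZ, Set.mem_union, Set.mem_prod, Set.mem_Ico] at hp ⊢
    have hcases : (0 ≤ u ∧ u < 1 ∧ 0 ≤ v ∧ v < β⁻¹) ∨
        (0 ≤ u ∧ u < β⁻¹ ∧ β⁻¹ ≤ v ∧ v < 1) := by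
      rcases hp with ⟨⟨hu0, hu1⟩, hv0, hv1⟩ | ⟨⟨hu0, hu1⟩, hv0, hv1⟩
      · rcases lt_or_ge v β⁻¹ with h | h
        · exact Or.inl ⟨hu0, lt_trans hu1 hinv1, hv0, h⟩
        · exact Or.inr ⟨hu0, hu1, h, hv1⟩
      · exact Or.inl ⟨le_trans (le_of_lt hinv0) hu0, hu1, hv0, hv1⟩
    rcases hcases with ⟨hu0, hu1, hv0, hv1⟩ | ⟨hu0, hu1, hv0, hv1⟩
    · have hfl : ⌊β * v⌋ = 0 := hfl0 v hv0 hv1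
      have hfr : Int.fract (β * v) = β * v := by rw [Int.fract, hfl]; push_cast; ring
      simp only [hg, hfl, hfr]
      push_cast
      left
      refine ⟨⟨by positivity, ?_⟩, by positivity, hml v hv1⟩
      rw [add_zero]; exact hdl u hu1
    · have hfl : ⌊β * v⌋ = 1 := hfl1 v hv0 hv1
      have hfr : Int.fract (β * v) = β * v - 1 := by rw [Int.fract, hfl]; push_cast; ring
      simp only [hg, hfl, hfr]
      push_cast
      right
      refine ⟨⟨?_, ?_⟩, ?_, ?_⟩
      · rw [le_div_iff₀ hb0]; rw [hinv] at *; nlinarith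
      · rw [div_lt_one hb0, hinv] at *; linarith
      · linarith [hmg' v hv0]
      · rw [hinv]; linarith [hmb v hv1]
  have hleft : Set.LeftInvOn g (natExtMap β) Z := by
    rintro ⟨x, y⟩ hp
    simp only [hZ, Set.mem_union, Set.mem_prod, Set.mem_Ico] at hp
    rcases hp with ⟨⟨hx0, hx1⟩, hy0, hy1⟩ | ⟨⟨hx0, hx1⟩, hy0, hy1⟩
    · have hfl : ⌊β * x⌋ = 0 := hfl0 x hx0 hx1
      have hfr : Int.fract (β * x) = β * x := by rw [Int.fract, hfl]; push_cast; ring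
      simp only [hg, natExtMap, hfr, hfl]
      push_cast
      have h1 : β * ((y + 0) / β) = y := by field_simp; ring
      have hfl2 : ⌊β * ((y + 0) / β)⌋ = 0 := by
        rw [h1, Int.floor_eq_zero_iff]; exact ⟨hy0, hy1⟩
      have hfr2 : Int.fract (β * ((y + 0) / β)) = y := by
        rw [Int.fract, hfl2, h1]; push_cast; ring
      rw [hfl2, hfr2]
      push_cast
      refine Prod.ext ?_ rfl
      field_simp; ring
    · have hfl : ⌊β * x⌋ = 1 := hfl1 x hx0 hx1
      have hfr : Int.fract (β * x) = β * x - 1 := by rw [Int.fract, hfl]; push_cast; ring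
      simp only [hg, natExtMap, hfr, hfl]
      push_cast
      have h1 : β * ((y + 1) / β) = y + 1 := by field_simp
      have hfl2 : ⌊β * ((y + 1) / β)⌋ = 1 := by
        rw [h1]
        have : ⌊y + (1:ℤ)⌋ = ⌊y⌋ + 1 := Int.floor_add_intCast y 1
        push_cast at this
        rw [this, Int.floor_eq_zero_iff.mpr ⟨hy0, lt_trans hy1 hinv1⟩]; norm_num
      have hfr2 : Int.fract (β * ((y + 1) / β)) = y := by
        rw [Int.fract, hfl2, h1]; push_cast; ring
      rw [hfl2, hfr2]
      push_cast
      refine Prod.ext ?_ rfl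
      field_simp; ring
  have hright : Set.RightInvOn g (natExtMap β) Z := by
    rintro ⟨u, v⟩ hp
    simp only [hZ, Set.mem_union, Set.mem_prod, Set.mem_Ico] at hp
    have hcases : (0 ≤ u ∧ u < 1 ∧ 0 ≤ v ∧ v < β⁻¹) ∨
        (0 ≤ u ∧ u < β⁻¹ ∧ β⁻¹ ≤ v ∧ v < 1) := by
      rcases hp with ⟨⟨hu0, hu1⟩, hv0, hv1⟩ | ⟨⟨hu0, hu1⟩, hv0, hv1⟩
      · rcases lt_or_ge v β⁻¹ with h | h
        · exact Or.inl ⟨hu0, lt_trans hu1 hinv1, hv0, h⟩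
        · exact Or.inr ⟨hu0, hu1, h, hv1⟩
      · exact Or.inl ⟨le_trans (le_of_lt hinv0) hu0, hu1, hv0, hv1⟩
    rcases hcases with ⟨hu0, hu1, hv0, hv1⟩ | ⟨hu0, hu1, hv0, hv1⟩
    · have hfl : ⌊β * v⌋ = 0 := hfl0 v hv0 hv1
      have hfr : Int.fract (β * v) = β * v := by rw [Int.fract, hfl]; push_cast; ring
      simp only [hg, natExtMap, hfr, hfl]
      push_cast
      have h1 : β * ((u + 0) / β) = u := by field_simp; ring
      have hfl2 : ⌊β * ((u + 0) / β)⌋ = 0 := by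
        rw [h1, Int.floor_eq_zero_iff]; exact ⟨hu0, hu1⟩
      have hfr2 : Int.fract (β * ((u + 0) / β)) = u := by
        rw [Int.fract, hfl2, h1]; push_cast; ring
      rw [hfl2, hfr2]
      push_cast
      refine Prod.ext rfl ?_
      field_simp; ring
    · have hfl : ⌊β * v⌋ = 1 := hfl1 v hv0 hv1
      have hfr : Int.fract (β * v) = β * v - 1 := by rw [Int.fract, hfl]; push_cast; ring
      simp only [hg, natExtMap, hfr, hfl]
      push_cast
      have h1 : β * ((u + 1) / β) = u + 1 := by field_simp
      have hfl2 : ⌊β * ((u + 1) / β)⌋ = 1 := by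
        rw [h1]
        have : ⌊u + (1:ℤ)⌋ = ⌊u⌋ + 1 := Int.floor_add_intCast u 1
        push_cast at this
        rw [this, Int.floor_eq_zero_iff.mpr ⟨hu0, lt_trans hu1 hinv1⟩]; norm_num
      have hfr2 : Int.fract (β * ((u + 1) / β)) = u := by
        rw [Int.fract, hfl2, h1]; push_cast; ring
      rw [hfl2, hfr2]
      push_cast
      refine Prod.ext rfl ?_
      field_simp; ring
  exact Set.InvOn.bijOn ⟨hleft, hright⟩ hmf hmg
end

section
/- Let β = (1+√5)/2, W = [0,1) × [0, 1/β), and T_β : Z → Z the natural extension of the golden-ratio map as above. Then the first return time of (x,y) ∈ W to W under T_β equals 1 if x ∈ [0, 1/β) and equals 2 if x ∈ [1/β, 1), and the induced (first return) map on W is given by T_{β,W}(x,y) = (βx, y/β) for (x,y) ∈ [0,1/β) × [0,1/β), and T_{β,W}(x,y) = (β²x − β, (y+1)/β²) for (x,y) ∈ [1/β,1) × [0,1/β). -/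
/-- The first return time to a set `A` (with `sInf ∅ = 0`). -/
noncomputable def retTime {X : Type*} (f : X → X) (A : Set X) (x : X) : ℕ :=
  sInf {m : ℕ | 1 ≤ m ∧ f^[m] x ∈ A}

/-- The first return (induced) map. -/
noncomputable def retMap {X : Type*} (f : X → X) (A : Set X) (x : X) : X :=
  f^[retTime f A x] x

/-- For `β = (1+√5)/2` and `W = [0,1) × [0,1/β)`, the first return time of `(x,y) ∈ W` to
`W` under the natural extension `T_β` is `1` if `x ∈ [0,1/β)` and `2` if `x ∈ [1/β,1)`;
the induced map is `(x,y) ↦ (βx, y/β)` on `[0,1/β) × [0,1/β)` and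
`(x,y) ↦ (β²x − β, (y+1)/β²)` on `[1/β,1) × [0,1/β)`. -/
theorem stmt_16 (β : ℝ) (hβ : β = (1 + Real.sqrt 5) / 2) :
    ∀ p ∈ Set.Ico (0 : ℝ) 1 ×ˢ Set.Ico (0 : ℝ) β⁻¹,
      (p.1 < β⁻¹ →
        retTime (natExtMap β) (Set.Ico (0 : ℝ) 1 ×ˢ Set.Ico (0 : ℝ) β⁻¹) p = 1 ∧
        retMap (natExtMap β) (Set.Ico (0 : ℝ) 1 ×ˢ Set.Ico (0 : ℝ) β⁻¹) p =
          (β * p.1, p.2 / β)) ∧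
      (β⁻¹ ≤ p.1 →
        retTime (natExtMap β) (Set.Ico (0 : ℝ) 1 ×ˢ Set.Ico (0 : ℝ) β⁻¹) p = 2 ∧
        retMap (natExtMap β) (Set.Ico (0 : ℝ) 1 ×ˢ Set.Ico (0 : ℝ) β⁻¹) p =
          (β ^ 2 * p.1 - β, (p.2 + 1) / β ^ 2)) := by
  have h5 : Real.sqrt 5 ^ 2 = 5 := Real.sq_sqrt (by norm_num)
  have h5n : (0:ℝ) ≤ Real.sqrt 5 := Real.sqrt_nonneg 5
  have hβ1 : 1 < β := by nlinarith
  have hβlt2 : β < 2 := by nlinarith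
  have hβ2 : β ^ 2 = β + 1 := by rw [hβ]; nlinarith
  have hβ0 : 0 < β := by linarith
  have hinv : β⁻¹ = β - 1 := inv_eq_of_mul_eq_one_right (by nlinarith)
  set W : Set (ℝ × ℝ) := Set.Ico (0 : ℝ) 1 ×ˢ Set.Ico (0 : ℝ) β⁻¹ with hW
  rintro ⟨x, y⟩ hp
  obtain ⟨⟨hx0, hx1⟩, hy0, hy1⟩ := hp
  simp only at hx0 hx1 hy0 hy1
  constructor
  · intro hxlt
    have hfl : ⌊β * x⌋ = 0 := by
      rw [Int.floor_eq_zero_iff]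
      constructor
      · positivity
      · have : β * x < β * β⁻¹ := by
          exact mul_lt_mul_of_pos_left hxlt hβ0
        rwa [mul_inv_cancel₀ (ne_of_gt hβ0)] at this
    have hT : natExtMap β (x, y) = (β * x, y / β) := by
      simp [natExtMap, Int.fract, hfl]
    have hTW : natExtMap β (x, y) ∈ W := by
      rw [hT, hW]
      refine ⟨⟨by positivity, ?_⟩, ⟨by positivity, ?_⟩⟩
      · have : β * x < β * β⁻¹ := mul_lt_mul_of_pos_left hxlt hβ0
        rwa [mul_inv_cancel₀ (ne_of_gt hβ0)] at this
      · rw [div_lt_iff₀ hβ0, inv_mul_cancel₀ (ne_of_gt hβ0)]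
        linarith [hinv]
    have hmem1 : (1 : ℕ) ∈ {m : ℕ | 1 ≤ m ∧ (natExtMap β)^[m] (x, y) ∈ W} :=
      ⟨le_refl 1, by simpa using hTW⟩
    have hrt : retTime (natExtMap β) W (x, y) = 1 := by
      apply le_antisymm (Nat.sInf_le hmem1)
      exact (Nat.sInf_mem ⟨1, hmem1⟩).1
    refine ⟨hrt, ?_⟩
    rw [retMap, hrt, Function.iterate_one, hT]
  · intro hxge
    have hβx1 : 1 ≤ β * x := by
      have : β * β⁻¹ ≤ β * x := mul_le_mul_of_nonneg_left hxge (le_of_lt hβ0)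
      rwa [mul_inv_cancel₀ (ne_of_gt hβ0)] at this
    have hβx2 : β * x < 2 := by nlinarith
    have hfl : ⌊β * x⌋ = 1 := by
      rw [Int.floor_eq_iff]
      push_cast
      exact ⟨hβx1, by linarith⟩
    have hT : natExtMap β (x, y) = (β * x - 1, (y + 1) / β) := by
      simp [natExtMap, Int.fract, hfl]
    have hTnW : natExtMap β (x, y) ∉ W := by
      rw [hT, hW]
      rintro ⟨-, -, h2⟩
      rw [div_lt_iff₀ hβ0, inv_mul_cancel₀ (ne_of_gt hβ0)] at h2
      linarith
    have hfl2 : ⌊β * (β * x - 1)⌋ = 0 := by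
      rw [Int.floor_eq_zero_iff]
      constructor
      · nlinarith
      · nlinarith
    have hT2 : (natExtMap β)^[2] (x, y) = (β ^ 2 * x - β, (y + 1) / β ^ 2) := by
      show natExtMap β (natExtMap β (x, y)) = _
      rw [hT]
      simp only [natExtMap, Int.fract, hfl2, Int.cast_zero, add_zero, sub_zero]
      rw [Prod.mk.injEq]
      constructor
      · ring
      · rw [div_div, ← pow_two]
    have hT2W : (natExtMap β)^[2] (x, y) ∈ W := by
      rw [hT2, hW]
      refine ⟨⟨by nlinarith, by nlinarith⟩, ⟨by positivity, ?_⟩⟩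
      rw [div_lt_iff₀ (by positivity)]
      nlinarith
    have hmem2 : (2 : ℕ) ∈ {m : ℕ | 1 ≤ m ∧ (natExtMap β)^[m] (x, y) ∈ W} :=
      ⟨by norm_num, hT2W⟩
    have hrt : retTime (natExtMap β) W (x, y) = 2 := by
      apply le_antisymm (Nat.sInf_le hmem2)
      have h1 : (1:ℕ) ∉ {m : ℕ | 1 ≤ m ∧ (natExtMap β)^[m] (x, y) ∈ W} := by
        intro h
        exact hTnW (by simpa using h.2)
      have hm := Nat.sInf_mem
        (⟨2, hmem2⟩ : Set.Nonempty {m : ℕ | 1 ≤ m ∧ (natExtMap β)^[m] (x, y) ∈ W})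
      rcases eq_or_lt_of_le hm.1 with he | hl
      · exact absurd (by rwa [← he] at hm) h1
      · exact hl
    refine ⟨hrt, ?_⟩
    rw [retMap, hrt, hT2]
end

section
/- Let β = (1+√5)/2. The map Ψ : [0,1)² → W = [0,1) × [0,1/β) given by Ψ(x,y) = (x, y/β) conjugates the natural extension 𝒮 of the GLS transformation to the induced map T_{β,W}: that is, Ψ ∘ 𝒮 = T_{β,W} ∘ Ψ, where 𝒮(x,y) = (βx, y/β) for x ∈ [0,1/β) and 𝒮(x,y) = (β²x − β, (y+β)/β²) for x ∈ [1/β,1). -/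
/-- The natural extension `𝒮` of the golden-ratio GLS transformation. -/
noncomputable def glsNatExt (β : ℝ) (p : ℝ × ℝ) : ℝ × ℝ :=
  if p.1 < β⁻¹ then (β * p.1, p.2 / β) else (β ^ 2 * p.1 - β, (p.2 + β) / β ^ 2)

/-- The induced map `T_{β,W}` of the natural extension of `T_β` on `W = [0,1) × [0,1/β)`. -/
noncomputable def inducedGolden (β : ℝ) (p : ℝ × ℝ) : ℝ × ℝ :=
  if p.1 < β⁻¹ then (β * p.1, p.2 / β) else (β ^ 2 * p.1 - β, (p.2 + 1) / β ^ 2)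

/-- For `β = (1+√5)/2`, the map `Ψ(x,y) = (x, y/β)` conjugates the natural extension `𝒮` of
the GLS transformation on `[0,1)²` to the induced map `T_{β,W}` on `W = [0,1) × [0,1/β)`:
`Ψ ∘ 𝒮 = T_{β,W} ∘ Ψ`. -/
theorem stmt_17 (β : ℝ) (hβ : β = (1 + Real.sqrt 5) / 2) :
    ∀ p ∈ Set.Ico (0 : ℝ) 1 ×ˢ Set.Ico (0 : ℝ) 1,
      (fun q : ℝ × ℝ => (q.1, q.2 / β)) (glsNatExt β p) =
        inducedGolden β ((fun q : ℝ × ℝ => (q.1, q.2 / β)) p) := by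
  have h5 : (0:ℝ) < Real.sqrt 5 := Real.sqrt_pos.mpr (by norm_num)
  have hβ0 : β ≠ 0 := by rw [hβ]; positivity
  intro p _
  simp only [glsNatExt, inducedGolden]
  split_ifs with h
  · rfl
  · have key : (p.2 + β) / β ^ 2 / β = (p.2 / β + 1) / β ^ 2 := by
      have h1 : p.2 / β + 1 = (p.2 + β) / β := by
        field_simp
      rw [h1, div_div, div_div]
      ring_nf
    simp [key]
end

section
/- Let β > 1 with β-expansion of 1 equal to 1 = .b₁b₂⋯, set b₀ = 0. For every integer n ≥ 1 there exist unique integers k ≥ 0 and 1 ≤ i ≤ b_{k+1} such that n = b₀ + b₁ + ⋯ + b_k + (i − 1); moreover the intervals I_n = [b₁/β + ⋯ + b_k/β^k + (i−1)/β^{k+1}, b₁/β + ⋯ + b_k/β^k + i/β^{k+1}) form a partition of [0,1) consisting of pairwise disjoint intervals of lengths 1/β^{k(n)+1} whose total Lebesgue measure is 1. -/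
open MeasureTheory

/-- The partial sum `c k = b₁/β + ⋯ + b_k/β^k`. -/
noncomputable def betaPartial (β : ℝ) (b : ℕ → ℕ) (k : ℕ) : ℝ :=
  ∑ j ∈ Finset.range k, (b (j + 1) : ℝ) / β ^ (j + 1)

/-- The interval `I_{(k,i)} = [c_k + (i−1)/β^{k+1}, c_k + i/β^{k+1})`. -/
noncomputable def betaInterval (β : ℝ) (b : ℕ → ℕ) (k i : ℕ) : Set ℝ :=
  Set.Ico (betaPartial β b k + ((i : ℝ) - 1) / β ^ (k + 1))
    (betaPartial β b k + (i : ℝ) / β ^ (k + 1))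

/-- Let `β > 1` with infinite β-expansion of `1` given by digits `b₁b₂⋯` (and `b₀ = 0`).
For every `n ≥ 1` there are unique `k ≥ 0`, `1 ≤ i ≤ b_{k+1}` with
`n = b₀ + b₁ + ⋯ + b_k + (i−1)` (stated as `n + 1 = (b₀ + ⋯ + b_k) + i`); moreover the
intervals `I_n` are pairwise disjoint, have lengths `1/β^{k(n)+1}`, and their union is all
of `[0,1)` (so their total Lebesgue measure is `1`). -/
theorem stmt_18 (β : ℝ) (hβ : 1 < β) (b : ℕ → ℕ)
    (hb0 : b 0 = 0) (hb1 : 1 ≤ b 1)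
    (hdig : ∀ m : ℕ, 1 ≤ m → (b m : ℝ) ≤ β)
    (hsum : ∑' j : ℕ, (b (j + 1) : ℝ) / β ^ (j + 1) = 1)
    (hinf : ∀ N : ℕ, ∃ m ≥ N, 0 < b m) :
    (∀ n : ℕ, 1 ≤ n → ∃! ki : ℕ × ℕ, 1 ≤ ki.2 ∧ ki.2 ≤ b (ki.1 + 1) ∧
      n + 1 = (∑ j ∈ Finset.range (ki.1 + 1), b j) + ki.2) ∧
    (∀ k i k' i' : ℕ, 1 ≤ i → i ≤ b (k + 1) → 1 ≤ i' → i' ≤ b (k' + 1) →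
      (k, i) ≠ (k', i') →
      Disjoint (betaInterval β b k i) (betaInterval β b k' i')) ∧
    (∀ k i : ℕ, 1 ≤ i → i ≤ b (k + 1) →
      volume (betaInterval β b k i) = ENNReal.ofReal (1 / β ^ (k + 1))) ∧
    (⋃ k : ℕ, ⋃ i ∈ Finset.Icc 1 (b (k + 1)), betaInterval β b k i) =
      Set.Ico (0 : ℝ) 1 := by
  classical
  have hβ0 : (0:ℝ) < β := lt_trans one_pos hβ
  have hpow : ∀ k : ℕ, (0:ℝ) < β ^ k := fun k => pow_pos hβ0 k
  -- integer partial sums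
  have hSsucc : ∀ m, (∑ j ∈ Finset.range (m+1), b j) = (∑ j ∈ Finset.range m, b j) + b m :=
    fun m => Finset.sum_range_succ b m
  have hSmono : ∀ m m', m ≤ m' → (∑ j ∈ Finset.range m, b j) ≤ ∑ j ∈ Finset.range m', b j :=
    fun m m' h => Finset.sum_le_sum_of_subset (Finset.range_subset_range.mpr h)
  have hS1 : (∑ j ∈ Finset.range 1, b j) = 0 := by simp [hb0]
  have hunb : ∀ n : ℕ, ∃ k, n < ∑ j ∈ Finset.range (k+1), b j := by
    intro n; induction n with
    | zero =>
      refine ⟨1, ?_⟩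
      rw [hSsucc, hS1]; omega
    | succ n ih =>
      obtain ⟨k, hk⟩ := ih
      obtain ⟨m, hm, hbm⟩ := hinf (k+1)
      refine ⟨m, ?_⟩
      have h1 := hSmono _ _ hm
      rw [hSsucc]; omega
  have part1 : ∀ n : ℕ, 1 ≤ n → ∃! ki : ℕ × ℕ, 1 ≤ ki.2 ∧ ki.2 ≤ b (ki.1 + 1) ∧
      n + 1 = (∑ j ∈ Finset.range (ki.1 + 1), b j) + ki.2 := by
    intro n _
    have hKpos : 1 ≤ Nat.find (hunb n) := by
      by_contra h
      push_neg at h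
      have h0 : Nat.find (hunb n) = 0 := by omega
      have := Nat.find_spec (hunb n)
      rw [h0, hS1] at this
      omega
    set K := Nat.find (hunb n) with hKdef
    have hKspec : n < ∑ j ∈ Finset.range (K+1), b j := Nat.find_spec (hunb n)
    set k := K - 1 with hkdef
    have hKk : K = k + 1 := by omega
    have hlow : (∑ j ∈ Finset.range (k+1), b j) ≤ n := by
      have := Nat.find_min (hunb n) (show k < K by omega)
      omega
    have hhigh : n < (∑ j ∈ Finset.range (k+1), b j) + b (k+1) := by
      rw [← hSsucc, ← hKk]; exact hKspec
    refine ⟨(k, n + 1 - ∑ j ∈ Finset.range (k+1), b j), ⟨?_, ?_, ?_⟩, ?_⟩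
    · show 1 ≤ n + 1 - ∑ j ∈ Finset.range (k+1), b j
      omega
    · show n + 1 - (∑ j ∈ Finset.range (k+1), b j) ≤ b (k+1)
      omega
    · show n + 1 = (∑ j ∈ Finset.range (k+1), b j) + (n + 1 - ∑ j ∈ Finset.range (k+1), b j)
      omega
    rintro ⟨k', i'⟩ ⟨h1, h2, h3⟩
    simp only at h1 h2 h3 ⊢
    have hlow' : (∑ j ∈ Finset.range (k'+1), b j) ≤ n := by omega
    have hhigh' : n < (∑ j ∈ Finset.range (k'+1), b j) + b (k'+1) := by omega
    have hkk : k' = k := by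
      rcases Nat.lt_trichotomy k' k with h | h | h
      · exfalso
        have := hSmono (k'+2) (k+1) (by omega)
        rw [hSsucc] at this
        omega
      · exact h
      · exfalso
        have := hSmono (k+2) (k'+1) (by omega)
        rw [hSsucc] at this
        omega
    subst hkk
    simp only [Prod.mk.injEq]
    refine ⟨trivial, ?_⟩
    omega
  -- real partial sums
  have hterm : ∀ j : ℕ, (0:ℝ) ≤ (b (j+1) : ℝ) / β ^ (j+1) :=
    fun j => div_nonneg (Nat.cast_nonneg _) (hpow _).le
  have hcsucc : ∀ k, betaPartial β b (k+1) = betaPartial β b k + (b (k+1) : ℝ) / β ^ (k+1) :=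
    fun k => Finset.sum_range_succ _ k
  have hc0 : betaPartial β b 0 = 0 := Finset.sum_range_zero _
  have hcmono : Monotone (betaPartial β b) := by
    apply monotone_nat_of_le_succ
    intro k
    rw [hcsucc]
    linarith [hterm k]
  have hcnonneg : ∀ k, 0 ≤ betaPartial β b k := by
    intro k
    have := hcmono (Nat.zero_le k)
    rwa [hc0] at this
  have hsummable : Summable (fun j : ℕ => (b (j+1) : ℝ) / β ^ (j+1)) := by
    by_contra h
    rw [tsum_eq_zero_of_not_summable h] at hsum
    norm_num at hsum
  have hcle1 : ∀ k, betaPartial β b k ≤ 1 := by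
    intro k
    calc betaPartial β b k ≤ ∑' j : ℕ, (b (j+1) : ℝ) / β ^ (j+1) :=
          Summable.sum_le_tsum _ (fun j _ => hterm j) hsummable
      _ = 1 := hsum
  have hten : Filter.Tendsto (betaPartial β b) Filter.atTop (nhds 1) := by
    have h := hsummable.hasSum.tendsto_sum_nat
    rw [hsum] at h
    exact h
  -- key ordering lemma
  have key : ∀ k i k' i' : ℕ, 1 ≤ i' → i ≤ b (k+1) →
      (k < k' ∨ (k = k' ∧ i < i')) →
      betaPartial β b k + (i:ℝ)/β^(k+1) ≤ betaPartial β b k' + ((i':ℝ)-1)/β^(k'+1) := by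
    intro k i k' i' hi' hi hcase
    have hi'1 : (1:ℝ) ≤ (i':ℝ) := by exact_mod_cast hi'
    rcases hcase with h | ⟨rfl, h⟩
    · have h1 : betaPartial β b k + (i:ℝ)/β^(k+1) ≤ betaPartial β b (k+1) := by
        rw [hcsucc]
        have hcast : (i:ℝ) ≤ (b (k+1):ℝ) := Nat.cast_le.mpr hi
        have hp := hpow (k+1)
        gcongr
      have h2 : betaPartial β b (k+1) ≤ betaPartial β b k' := hcmono h
      have h3 : (0:ℝ) ≤ ((i':ℝ)-1)/β^(k'+1) :=
        div_nonneg (by linarith) (hpow _).le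
      linarith
    · have hle : (i:ℝ) ≤ (i':ℝ) - 1 := by
        have : (i:ℝ) + 1 ≤ (i':ℝ) := by exact_mod_cast h
        linarith
      have hp := hpow (k+1)
      gcongr
  have disj : ∀ k i k' i' : ℕ, 1 ≤ i → i ≤ b (k + 1) → 1 ≤ i' → i' ≤ b (k' + 1) →
      (k, i) ≠ (k', i') →
      Disjoint (betaInterval β b k i) (betaInterval β b k' i') := by
    intro k i k' i' hi1 hi2 hi1' hi2' hne
    have hcase : (k < k' ∨ (k = k' ∧ i < i')) ∨ (k' < k ∨ (k' = k ∧ i' < i)) := by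
      rcases Nat.lt_trichotomy k k' with h | h | h
      · exact Or.inl (Or.inl h)
      · subst h
        rcases Nat.lt_trichotomy i i' with h | h | h
        · exact Or.inl (Or.inr ⟨rfl, h⟩)
        · exact absurd (by rw [h]) hne
        · exact Or.inr (Or.inr ⟨rfl, h⟩)
      · exact Or.inr (Or.inl h)
    rw [betaInterval, betaInterval]
    rcases hcase with h | h
    · exact Set.Ico_disjoint_Ico.mpr
        (le_trans (min_le_left _ _) (le_trans (key k i k' i' hi1' hi2 h) (le_max_right _ _)))
    · exact Set.Ico_disjoint_Ico.mpr
        (le_trans (min_le_right _ _) (le_trans (key k' i' k i hi1 hi2' h) (le_max_left _ _)))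
  have vol : ∀ k i : ℕ, 1 ≤ i → i ≤ b (k + 1) →
      volume (betaInterval β b k i) = ENNReal.ofReal (1 / β ^ (k + 1)) := by
    intro k i _ _
    rw [betaInterval, Real.volume_Ico]
    congr 1
    have hp : β ^ (k+1) ≠ 0 := (hpow (k+1)).ne'
    field_simp
    ring
  refine ⟨part1, disj, vol, ?_⟩
  apply Set.eq_of_subset_of_subset
  · rintro x hx
    simp only [Set.mem_iUnion, Finset.mem_Icc] at hx
    obtain ⟨k, i, ⟨hi1, hi2⟩, hx⟩ := hx
    rw [betaInterval, Set.mem_Ico] at hx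
    obtain ⟨hxl, hxu⟩ := hx
    have hi1' : (1:ℝ) ≤ (i:ℝ) := by exact_mod_cast hi1
    have hp := hpow (k+1)
    constructor
    · have : (0:ℝ) ≤ ((i:ℝ)-1)/β^(k+1) := div_nonneg (by linarith) hp.le
      have := hcnonneg k
      linarith
    · have h1 : betaPartial β b k + (i:ℝ)/β^(k+1) ≤ betaPartial β b (k+1) := by
        rw [hcsucc]
        have hcast : (i:ℝ) ≤ (b (k+1):ℝ) := Nat.cast_le.mpr hi2
        gcongr
      have := hcle1 (k+1)
      linarith
  · rintro x ⟨hx0, hx1⟩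
    have hexk : ∃ k, x < betaPartial β b (k+1) := by
      obtain ⟨m, hm⟩ := (hten.eventually (eventually_gt_nhds hx1)).exists
      exact ⟨m, lt_of_lt_of_le hm (hcmono (Nat.le_succ m))⟩
    set K := Nat.find hexk with hKdef
    have hKspec : x < betaPartial β b (K+1) := Nat.find_spec hexk
    have hKlow : betaPartial β b K ≤ x := by
      rcases Nat.eq_zero_or_pos K with h | h
      · rw [h, hc0]; exact hx0
      · have hmin := Nat.find_min hexk (show K - 1 < K by omega)
        push_neg at hmin
        have hK : K - 1 + 1 = K := by omega
        rwa [hK] at hmin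
    have hp := hpow (K+1)
    set t := x - betaPartial β b K with htdef
    have ht0 : 0 ≤ t := sub_nonneg.mpr hKlow
    have htlt : t * β^(K+1) < (b (K+1) : ℝ) := by
      have h1 : x < betaPartial β b K + (b (K+1):ℝ)/β^(K+1) := by
        rw [← hcsucc]; exact hKspec
      have h2 : t < (b (K+1):ℝ)/β^(K+1) := by rw [htdef]; linarith
      rw [← lt_div_iff₀ hp]
      exact h2
    set i := Nat.floor (t * β^(K+1)) + 1 with hidef
    have hfl : (Nat.floor (t * β^(K+1)) : ℝ) ≤ t * β^(K+1) :=
      Nat.floor_le (mul_nonneg ht0 hp.le)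
    have hfu : t * β^(K+1) < (Nat.floor (t * β^(K+1)) : ℝ) + 1 :=
      Nat.lt_floor_add_one _
    have hib : i ≤ b (K+1) := by
      have hfloorlt : Nat.floor (t * β^(K+1)) < b (K+1) := by
        rw [Nat.floor_lt (mul_nonneg ht0 hp.le)]
        exact htlt
      omega
    simp only [Set.mem_iUnion, Finset.mem_Icc]
    refine ⟨K, i, ⟨by omega, hib⟩, ?_⟩
    rw [betaInterval, Set.mem_Ico]
    have hicast : (i:ℝ) = (Nat.floor (t * β^(K+1)) : ℝ) + 1 := by
      rw [hidef]; push_cast; ring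
    constructor
    · rw [hicast]
      have : ((Nat.floor (t * β^(K+1)) : ℝ) + 1 - 1)/β^(K+1) ≤ t := by
        rw [div_le_iff₀ hp]
        simpa using hfl
      linarith [this]
    · rw [hicast]
      have : t < ((Nat.floor (t * β^(K+1)) : ℝ) + 1)/β^(K+1) := by
        rw [lt_div_iff₀ hp]
        exact hfu
      linarith [this]
end
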